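/- arXiv:2506.23166 — 5 statements merged into one kernel-verified Lean document; each statement's English description precedes it below -/
import Mathlib

section
/- Let p > 2, f(t) = t²/2 − t^p/p, and define A : (0, ∞) \ {1} → ℝ by A(t) = 1/2 − (f(t) − f(1)) f''(t) / f'(t)². Then A extends continuously to (0, ∞) with A(1) = 0; moreover A(t) > 0 for t ∈ (0, 1), A(t) < 0 for t ∈ (1, ∞), lim_{t→0⁺} t² A(t) = f(1), and lim_{t→∞} A(t) = −(p−2)/(2p). -/
/-!
Write `g = f - f 1` and `Φ = f'² - 2 g f''`, so that `A = Φ / (2 f'²)` away from `t = 1`.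
Since `Φ' = -2 g f'''`, where `g < 0` off `t = 1` (Bernoulli's inequality for `(t²)^(p/2)`) and
`f''' = -(p-1)(p-2) t^(p-3) < 0`, the function `Φ` is strictly decreasing on `(0, ∞)`; it vanishes
at `1`, which gives the signs of `A`. At `t = 1`, where `g`, `f'` vanish and `f''(1) = 2 - p ≠ 0`,
L'Hôpital's rule gives `g / f'² → 1 / (2 f''(1))`, hence `A → 0`. The limits at `0` and `∞` follow
by factoring out the dominant powers: `f' = t (1 - t^(p-2))` near `0`, while `g`, `f'`, `f''`
behave like `t^p`, `t^(p-1)`, `t^(p-2)` at infinity.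
-/

open Set Real Filter Topology

lemma strictAntiOn_of_hasDerivAt_neg {D : Set ℝ} (hD : Convex ℝ D) {g g' : ℝ → ℝ}
    (hg : ∀ x ∈ D, HasDerivAt g (g' x) x) (hneg : ∀ x ∈ interior D, g' x < 0) :
    StrictAntiOn g D :=
  strictAntiOn_of_hasDerivWithinAt_neg hD (fun x hx ↦ (hg x hx).continuousAt.continuousWithinAt)
    (fun x hx ↦ (hg x (interior_subset hx)).hasDerivWithinAt) hneg

lemma strictAntiOn_Ioi_of_hasDerivAt_neg {g g' : ℝ → ℝ} {a c : ℝ} (hac : a < c)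
    (hg : ∀ x ∈ Ioi a, HasDerivAt g (g' x) x) (hneg : ∀ x ∈ Ioi a, x ≠ c → g' x < 0) :
    StrictAntiOn g (Ioi a) := by
  rw [← Ioc_union_Ici_eq_Ioi hac]
  refine StrictAntiOn.union ?_ ?_ (isGreatest_Ioc hac) isLeast_Ici
  · refine strictAntiOn_of_hasDerivAt_neg (convex_Ioc a c) (fun x hx ↦ hg x hx.1) fun x hx ↦ ?_
    rw [interior_Ioc] at hx
    exact hneg x hx.1 hx.2.ne
  · refine strictAntiOn_of_hasDerivAt_neg (convex_Ici c)
      (fun x hx ↦ hg x (hac.trans_le hx)) fun x hx ↦ ?_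
    rw [interior_Ici] at hx
    exact hneg x (hac.trans hx) hx.ne'

theorem HasDerivAt.sq_sub_two_mul_mul {g g₁ g₂ : ℝ → ℝ} {g₃ c t : ℝ}
    (hg : HasDerivAt g (g₁ t) t) (hg₁ : HasDerivAt g₁ (g₂ t) t) (hg₂ : HasDerivAt g₂ g₃ t) :
    HasDerivAt (fun x ↦ g₁ x ^ 2 - 2 * (g x - c) * g₂ x) (-2 * (g t - c) * g₃) t := by
  refine ((hg₁.pow 2).sub (((hg.sub_const c).const_mul 2).mul hg₂)).congr_deriv ?_
  ring

theorem tendsto_div_sq_nhdsNE_of_hasDerivAt {g g₁ g₂ : ℝ → ℝ} {c : ℝ}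
    (hg : ∀ᶠ x in 𝓝 c, HasDerivAt g (g₁ x) x) (hg₁ : ∀ᶠ x in 𝓝 c, HasDerivAt g₁ (g₂ x) x)
    (hg₂ : ContinuousAt g₂ c) (hg₂c : g₂ c ≠ 0) (hgc : g c = 0) (hg₁c : g₁ c = 0) :
    Tendsto (fun x ↦ g x / g₁ x ^ 2) (𝓝[≠] c) (𝓝 (2 * g₂ c)⁻¹) := by
  have hg₁_ne : ∀ᶠ x in 𝓝[≠] c, g₁ x ≠ 0 := hg₁c ▸ hg₁.self_of_nhds.eventually_ne hg₂c
  have hg₂_ne : ∀ᶠ x in 𝓝[≠] c, g₂ x ≠ 0 :=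
    eventually_nhdsWithin_of_eventually_nhds (hg₂.eventually_ne hg₂c)
  have hzero {h : ℝ → ℝ} (hh : ContinuousAt h c) (hc : h c = 0) : Tendsto h (𝓝[≠] c) (𝓝 0) :=
    hc ▸ hh.tendsto.mono_left nhdsWithin_le_nhds
  refine HasDerivAt.lhopital_zero_nhdsNE (g' := fun x ↦ 2 * g₁ x * g₂ x)
    (eventually_nhdsWithin_of_eventually_nhds hg) ?_ ?_
    (hzero hg.self_of_nhds.continuousAt hgc)
    (hzero (hg₁.self_of_nhds.continuousAt.pow 2) (by simp [hg₁c])) ?_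
  · refine eventually_nhdsWithin_of_eventually_nhds (hg₁.mono fun x hx ↦ ?_)
    exact (hx.pow 2).congr_deriv (by ring)
  · filter_upwards [hg₁_ne, hg₂_ne] with x h₁ h₂ using by positivity
  · have hlim : Tendsto (fun x ↦ (2 * g₂ x)⁻¹) (𝓝 c) (𝓝 (2 * g₂ c)⁻¹) :=
      (tendsto_const_nhds.mul hg₂.tendsto).inv₀ (by simpa using hg₂c)
    refine (hlim.mono_left nhdsWithin_le_nhds).congr' ?_
    filter_upwards [hg₁_ne] with x hx
    field_simp

namespace PowerPotential

noncomputable def potential (p t : ℝ) : ℝ := t ^ 2 / 2 - t ^ p / p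
noncomputable def potential' (p t : ℝ) : ℝ := t - t ^ (p - 1)
noncomputable def potential'' (p t : ℝ) : ℝ := 1 - (p - 1) * t ^ (p - 2)

noncomputable def coeffA (p t : ℝ) : ℝ :=
  1 / 2 - (potential p t - potential p 1) * potential'' p t / potential' p t ^ 2

noncomputable def numeratorA (p t : ℝ) : ℝ :=
  potential' p t ^ 2 - 2 * (potential p t - potential p 1) * potential'' p t

variable {p t : ℝ}

lemma hasDerivAt_potential (hp : 1 ≤ p) (t : ℝ) :
    HasDerivAt (potential p) (potential' p t) t := by
  have hp0 : p ≠ 0 := by positivity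
  refine (((hasDerivAt_pow 2 t).div_const 2).sub
    ((hasDerivAt_rpow_const (Or.inr hp)).div_const p)).congr_deriv ?_
  simp only [potential']
  field_simp
  ring

lemma hasDerivAt_potential' (hp : 2 ≤ p) (t : ℝ) :
    HasDerivAt (potential' p) (potential'' p t) t := by
  refine ((hasDerivAt_id t).sub (hasDerivAt_rpow_const (Or.inr (by linarith)))).congr_deriv ?_
  simp only [potential'', show p - 1 - 1 = p - 2 by ring]

lemma hasDerivAt_potential'' (ht : 0 < t) :
    HasDerivAt (potential'' p) (-((p - 1) * (p - 2) * t ^ (p - 3))) t := by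
  refine ((hasDerivAt_rpow_const (Or.inl ht.ne')).const_mul (p - 1)).const_sub 1 |>.congr_deriv ?_
  rw [show p - 2 - 1 = p - 3 by ring]
  ring

lemma deriv_potential (hp : 1 ≤ p) : deriv (potential p) = potential' p :=
  funext fun t ↦ (hasDerivAt_potential hp t).deriv

lemma deriv_potential' (hp : 2 ≤ p) : deriv (potential' p) = potential'' p :=
  funext fun t ↦ (hasDerivAt_potential' hp t).deriv

lemma continuous_potential (hp : 0 ≤ p) : Continuous (potential p) := by
  unfold potential; fun_prop (disch := assumption)

lemma continuous_potential' (hp : 1 ≤ p) : Continuous (potential' p) := by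
  have : 0 ≤ p - 1 := by linarith
  unfold potential'; fun_prop (disch := assumption)

lemma continuous_potential'' (hp : 2 ≤ p) : Continuous (potential'' p) := by
  have : 0 ≤ p - 2 := by linarith
  unfold potential''; fun_prop (disch := assumption)

lemma potential_lt_potential_one (hp : 2 < p) (ht : 0 ≤ t) (ht1 : t ≠ 1) :
    potential p t < potential p 1 := by
  have hbernoulli : 1 + p / 2 * (t ^ 2 - 1) < t ^ p := by
    have key := one_add_mul_self_lt_rpow_one_add (s := t ^ 2 - 1) (by nlinarith)
      (by intro h; apply ht1; nlinarith) (p := p / 2) (by linarith)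
    have hpow : (t ^ 2) ^ (p / 2) = t ^ p := by
      rw [← Real.rpow_natCast, ← Real.rpow_mul ht, Nat.cast_ofNat, mul_div_cancel₀ _ two_ne_zero]
    rwa [add_sub_cancel, hpow] at key
  have hp0 : 0 < p := by linarith
  simp only [potential, one_pow, Real.one_rpow]
  rw [← sub_pos]
  field_simp
  nlinarith

lemma potential'_eq (ht : 0 < t) : potential' p t = t * (1 - t ^ (p - 2)) := by
  rw [potential', show p - 1 = 1 + (p - 2) by ring, Real.rpow_add ht, Real.rpow_one]
  ring

lemma potential'_pos (hp : 2 < p) (ht : t ∈ Ioo 0 1) : 0 < potential' p t := by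
  rw [potential'_eq ht.1]
  have : t ^ (p - 2) < 1 := Real.rpow_lt_one ht.1.le ht.2 (by linarith)
  nlinarith [ht.1]

lemma potential'_neg (hp : 2 < p) (ht : 1 < t) : potential' p t < 0 := by
  rw [potential'_eq (by linarith)]
  have : 1 < t ^ (p - 2) := Real.one_lt_rpow ht (by linarith)
  nlinarith

lemma potential'_ne_zero (hp : 2 < p) (ht : 0 < t) (ht1 : t ≠ 1) : potential' p t ≠ 0 := by
  rcases ht1.lt_or_gt with h | h
  · exact (potential'_pos hp ⟨ht, h⟩).ne'
  · exact (potential'_neg hp h).ne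

lemma strictAntiOn_numeratorA (hp : 2 < p) : StrictAntiOn (numeratorA p) (Ioi 0) := by
  refine strictAntiOn_Ioi_of_hasDerivAt_neg zero_lt_one (fun t ht ↦
    (hasDerivAt_potential (by linarith) t).sq_sub_two_mul_mul (hasDerivAt_potential' hp.le t)
      (hasDerivAt_potential'' ht)) fun t ht ht1 ↦ ?_
  have hgap := sub_neg.2 (potential_lt_potential_one hp (le_of_lt ht) ht1)
  have hthird : 0 < (p - 1) * (p - 2) * t ^ (p - 3) := by
    have := Real.rpow_pos_of_pos (mem_Ioi.1 ht) (p - 3)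
    have : 0 < (p - 1) * (p - 2) := by nlinarith
    positivity
  nlinarith

lemma numeratorA_one : numeratorA p 1 = 0 := by simp [numeratorA, potential']

lemma coeffA_eq_numeratorA_div (hp : 2 < p) (ht : 0 < t) (ht1 : t ≠ 1) :
    coeffA p t = numeratorA p t / (2 * potential' p t ^ 2) := by
  have := potential'_ne_zero hp ht ht1
  rw [coeffA, numeratorA]
  field_simp

lemma coeffA_pos (hp : 2 < p) (ht : t ∈ Ioo 0 1) : 0 < coeffA p t := by
  rw [coeffA_eq_numeratorA_div hp ht.1 ht.2.ne]
  have hderiv := potential'_pos hp ht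
  have hnumer := numeratorA_one (p := p) ▸
    strictAntiOn_numeratorA hp ht.1 (mem_Ioi.2 one_pos) ht.2
  positivity

lemma coeffA_neg (hp : 2 < p) (ht : 1 < t) : coeffA p t < 0 := by
  rw [coeffA_eq_numeratorA_div hp (one_pos.trans ht) ht.ne']
  have hderiv := (potential'_neg hp ht).ne
  have hnumer := numeratorA_one (p := p) ▸
    strictAntiOn_numeratorA hp (mem_Ioi.2 one_pos) (one_pos.trans ht) ht
  exact div_neg_of_neg_of_pos hnumer (by positivity)

lemma potential''_one : potential'' p 1 = 2 - p := by simp [potential'']; ring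

lemma tendsto_coeffA_one (hp : 2 < p) : Tendsto (coeffA p) (𝓝[≠] 1) (𝓝 0) := by
  have hratio := tendsto_div_sq_nhdsNE_of_hasDerivAt (g := fun t ↦ potential p t - potential p 1)
    (.of_forall fun t ↦ (hasDerivAt_potential (by linarith) t).sub_const _)
    (.of_forall (hasDerivAt_potential' hp.le)) (continuous_potential'' hp.le).continuousAt
    (by rw [potential''_one]; linarith) (sub_self _) (by simp [potential'])
  have hlim := (tendsto_const_nhds (x := (1 / 2 : ℝ))).sub <| hratio.mul <|
    (continuous_potential'' hp.le).continuousAt.tendsto.mono_left nhdsWithin_le_nhds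
  have hval : 1 / 2 - (2 * potential'' p 1)⁻¹ * potential'' p 1 = 0 := by
    have : potential'' p 1 ≠ 0 := by rw [potential''_one]; linarith
    field_simp
    ring
  rw [hval] at hlim
  refine hlim.congr fun t ↦ ?_
  rw [coeffA, mul_div_right_comm]

lemma continuousAt_coeffA (hp : 2 < p) (ht : 0 < t) (ht1 : t ≠ 1) :
    ContinuousAt (coeffA p) t := by
  have := continuous_potential (p := p) (by linarith)
  have := continuous_potential' (p := p) (by linarith)
  have := continuous_potential'' (p := p) (by linarith)
  have := potential'_ne_zero hp ht ht1
  unfold coeffA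
  fun_prop (disch := positivity)

lemma continuousOn_update_coeffA (hp : 2 < p) :
    ContinuousOn (Function.update (coeffA p) 1 0) (Ioi 0) := by
  refine continuousOn_update_iff.2 ⟨fun t ht ↦ ?_, fun _ ↦ ?_⟩
  · exact (continuousAt_coeffA hp ht.1 ht.2).continuousWithinAt
  · exact (tendsto_coeffA_one hp).mono_left (nhdsWithin_mono _ fun t ht ↦ ht.2)

lemma tendsto_sq_mul_coeffA (hp : 2 < p) :
    Tendsto (fun t ↦ t ^ 2 * coeffA p t) (𝓝[>] 0) (𝓝 (potential p 1)) := by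
  have hp2 : p - 2 ≠ 0 := by linarith
  set h : ℝ → ℝ := fun t ↦ t ^ 2 / 2 -
    (potential p t - potential p 1) * potential'' p t / (1 - t ^ (p - 2)) ^ 2 with h_def
  have hcont : ContinuousAt h 0 := by
    have := continuous_potential (p := p) (by linarith)
    have := continuous_potential'' (p := p) (by linarith)
    have : Continuous fun t : ℝ ↦ t ^ (p - 2) := continuous_rpow_const (by linarith)
    fun_prop (disch := simp [Real.zero_rpow hp2])
  have h0 : h 0 = potential p 1 := by
    simp [h_def, potential, potential'', Real.zero_rpow hp2, Real.zero_rpow (by linarith : p ≠ 0)]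
  refine (h0 ▸ hcont.tendsto.mono_left nhdsWithin_le_nhds).congr' ?_
  filter_upwards [Ioo_mem_nhdsGT one_pos] with t ht
  have : 1 - t ^ (p - 2) ≠ 0 := (sub_pos.2 (Real.rpow_lt_one ht.1.le ht.2 (by linarith))).ne'
  have := ht.1.ne'
  rw [h_def, coeffA, potential'_eq ht.1]
  field_simp

lemma coeffA_eq_rpow_neg (ht : 0 < t) :
    coeffA p t = 1 / 2 - (t ^ (2 - p) / 2 - 1 / p - potential p 1 * t ^ (-p)) *
      (t ^ (2 - p) - (p - 1)) / (t ^ (2 - p) - 1) ^ 2 := by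
  have hmul (a b : ℝ) : t ^ a * t ^ b = t ^ (a + b) := (Real.rpow_add ht a b).symm
  have hgap : potential p t - potential p 1 =
      t ^ p * (t ^ (2 - p) / 2 - 1 / p - potential p 1 * t ^ (-p)) := by
    have e1 : t ^ p * t ^ (2 - p) = t ^ 2 := by rw [hmul, add_sub_cancel, rpow_two]
    have e2 : t ^ p * t ^ (-p) = 1 := by rw [hmul, add_neg_cancel, rpow_zero]
    rw [potential]
    linear_combination -e1 / 2 + potential p 1 * e2
  have hd1 : potential' p t = t ^ (p - 1) * (t ^ (2 - p) - 1) := by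
    rw [potential', mul_sub, mul_one, hmul, show p - 1 + (2 - p) = 1 by ring, rpow_one]
  have hd2 : potential'' p t = t ^ (p - 2) * (t ^ (2 - p) - (p - 1)) := by
    rw [potential'', mul_sub, hmul, show p - 2 + (2 - p) = 0 by ring, rpow_zero]
    ring
  have hscale : t ^ p * t ^ (p - 2) = (t ^ (p - 1)) ^ 2 := by
    rw [sq, hmul, hmul]
    ring_nf
  have : (t ^ (p - 1)) ^ 2 ≠ 0 := by positivity
  rw [coeffA, hgap, hd1, hd2, mul_mul_mul_comm, hscale, mul_pow, mul_div_mul_left _ _ this]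

lemma tendsto_coeffA_atTop (hp : 2 < p) :
    Tendsto (coeffA p) atTop (𝓝 (-(p - 2) / (2 * p))) := by
  have hs : Tendsto (fun t : ℝ ↦ t ^ (2 - p)) atTop (𝓝 0) := by
    simpa [show -(p - 2) = 2 - p by ring] using tendsto_rpow_neg_atTop (y := p - 2) (by linarith)
  have hu : Tendsto (fun t : ℝ ↦ t ^ (-p)) atTop (𝓝 0) := tendsto_rpow_neg_atTop (by linarith)
  have hlim : Tendsto (fun t ↦ 1 / 2 - (t ^ (2 - p) / 2 - 1 / p - potential p 1 * t ^ (-p)) *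
      (t ^ (2 - p) - (p - 1)) / (t ^ (2 - p) - 1) ^ 2) atTop
      (𝓝 (1 / 2 - (0 / 2 - 1 / p - potential p 1 * 0) * (0 - (p - 1)) / (0 - 1) ^ 2)) :=
    tendsto_const_nhds.sub <| ((((hs.div_const 2).sub tendsto_const_nhds).sub
      (hu.const_mul _)).mul (hs.sub tendsto_const_nhds)).div
      ((hs.sub tendsto_const_nhds).pow 2) (by norm_num)
  have hval : (1 / 2 : ℝ) - (0 / 2 - 1 / p - potential p 1 * 0) * (0 - (p - 1)) / (0 - 1) ^ 2 =
      -(p - 2) / (2 * p) := by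
    field_simp
    ring
  rw [hval] at hlim
  refine hlim.congr' ?_
  filter_upwards [eventually_gt_atTop 0] with t ht
  exact (coeffA_eq_rpow_neg ht).symm

end PowerPotential

open PowerPotential

theorem stmt_4 (p : ℝ) (hp : 2 < p) (f A : ℝ → ℝ)
    (hf : ∀ t : ℝ, f t = t ^ 2 / 2 - t ^ p / p)
    (hA : ∀ t : ℝ, 0 < t → t ≠ 1 →
      A t = 1 / 2 - (f t - f 1) * deriv (deriv f) t / (deriv f t) ^ 2) :
    (∃ A' : ℝ → ℝ, ContinuousOn A' (Ioi 0) ∧ (∀ t : ℝ, 0 < t → t ≠ 1 → A' t = A t) ∧ A' 1 = 0) ∧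
    (∀ t ∈ Ioo (0 : ℝ) 1, 0 < A t) ∧ (∀ t ∈ Ioi (1 : ℝ), A t < 0) ∧
    Tendsto (fun t => t ^ 2 * A t) (nhdsWithin 0 (Ioi 0)) (nhds (f 1)) ∧
    Tendsto A atTop (nhds (-(p - 2) / (2 * p))) := by
  obtain rfl : f = potential p := funext hf
  have hA_eq {t : ℝ} (ht : 0 < t) (ht1 : t ≠ 1) : A t = coeffA p t := by
    rw [hA t ht ht1, deriv_potential (by linarith), deriv_potential' hp.le, coeffA]
  refine ⟨⟨Function.update (coeffA p) 1 0, continuousOn_update_coeffA hp, fun t ht ht1 ↦ ?_,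
    Function.update_self ..⟩, fun t ht ↦ ?_, fun t ht ↦ ?_, ?_, ?_⟩
  · rw [Function.update_of_ne ht1, hA_eq ht ht1]
  · exact hA_eq ht.1 ht.2.ne ▸ coeffA_pos hp ht
  · exact hA_eq (one_pos.trans ht) (ne_of_gt ht) ▸ coeffA_neg hp ht
  · refine (tendsto_sq_mul_coeffA hp).congr' ?_
    filter_upwards [Ioo_mem_nhdsGT one_pos] with t ht
    rw [hA_eq ht.1 ht.2.ne]
  · refine (tendsto_coeffA_atTop hp).congr' ?_
    filter_upwards [eventually_gt_atTop 1] with t ht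
    rw [hA_eq (one_pos.trans ht) (ne_of_gt ht)]
end

section
/- Let p > 2, f(t) = t²/2 − t^p/p, and define ρ : (0, ∞) \ {1} → ℝ by ρ(t) = −3 f''(t) f'(t)² + 6 (f(t) − f(1)) f''(t)² − 2 (f(t) − f(1)) f'''(t) f'(t). Then ρ(t) < 0 for all t ∈ (0, ∞) with t ≠ 1, and lim_{t→0⁺} ρ(t) = −6 f(1). -/
/-!
With `s = t ^ (p - 2)`, a direct computation gives `ρ t = -((p - 2) / p) * Q(t, s)` for the
polynomial `Q = rhoPoly p` with `Q(0, 0) = 3`; this gives the limit `-3 (p - 2) / p = -6 f 1`.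

For the sign, substitute `t = eˣ`: then `Q = e^{(p-2)x} G(x)` for the exponential polynomial
`G(x) = ∑ cᵢ e^{aᵢ x}` with coefficients `rhoCoeff` and exponents `rhoExp`, and `∑ cᵢ aᵢᵏ = 0`
for `k ≤ 3`. Hence `G` and `H = e^{-px} G''` both vanish to second order at `0`. In `H''` the only
negative term, a multiple of `e^{(2-p)x}`, is dominated by the `e^{(2-2p)x}` and `e^{(p-2)x}`
terms, so `H'' > 0`. Strict convexity then gives `H > 0` off `0`, hence `G'' > 0` off `0`, hence
`G > 0` off `0`, i.e. `Q(t, s) > 0` for `t ≠ 1`.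
-/

open Set Real Filter

theorem pos_of_hasDerivAt_of_deriv2_pos {g g' g'' : ℝ → ℝ} {a x : ℝ}
    (hg : ∀ x, HasDerivAt g (g' x) x) (hg' : ∀ x, HasDerivAt g' (g'' x) x)
    (ha : g a = 0) (ha' : g' a = 0) (hg'' : ∀ x ≠ a, 0 < g'' x) (hx : x ≠ a) : 0 < g x := by
  have hcont : Continuous g' := continuous_iff_continuousAt.2 fun x => (hg' x).continuousAt
  have hmono : StrictMono g' := by
    refine StrictMonoOn.Iic_union_Ici (a := a) ?_ ?_
    · refine strictMonoOn_of_hasDerivWithinAt_pos (convex_Iic a) hcont.continuousOn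
        (fun x _ => (hg' x).hasDerivWithinAt) fun x hx => hg'' x ?_
      rw [interior_Iic] at hx
      exact hx.ne
    · refine strictMonoOn_of_hasDerivWithinAt_pos (convex_Ici a) hcont.continuousOn
        (fun x _ => (hg' x).hasDerivWithinAt) fun x hx => hg'' x ?_
      rw [interior_Ici] at hx
      exact hx.ne'
  have hconv : StrictConvexOn ℝ univ g := by
    refine StrictMono.strictConvexOn_univ_of_deriv
      (continuous_iff_continuousAt.2 fun x => (hg x).continuousAt) ?_
    rwa [show deriv g = g' from funext fun x => (hg x).deriv]
  rcases hx.lt_or_gt with hxa | hax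
  · have := hconv.slope_lt_of_hasDerivAt (mem_univ x) (mem_univ a) hxa (hg a)
    rw [slope_def_field, ha, ha', div_neg_iff] at this
    rcases this with h | h <;> linarith [h.1, h.2]
  · have := hconv.lt_slope_of_hasDerivAt (mem_univ a) (mem_univ x) hax (hg a)
    rw [slope_def_field, ha, ha', div_pos_iff] at this
    rcases this with h | h <;> linarith [h.1, h.2]

theorem exp_mul_le_exp_mul_add_exp_mul {a b c : ℝ} (hab : a ≤ b) (hbc : b ≤ c) (y : ℝ) :
    exp (b * y) ≤ exp (a * y) + exp (c * y) := by
  rcases le_total 0 y with hy | hy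
  · linarith [exp_le_exp.2 (mul_le_mul_of_nonneg_right hbc hy), exp_pos (a * y)]
  · linarith [exp_le_exp.2 (mul_le_mul_of_nonpos_right hab hy), exp_pos (c * y)]

section ExpPoly

variable {ι : Type*} [Fintype ι]

noncomputable def expPoly (c a : ι → ℝ) (y : ℝ) : ℝ := ∑ i, c i * exp (a i * y)

theorem hasDerivAt_expPoly (c a : ι → ℝ) (y : ℝ) :
    HasDerivAt (expPoly c a) (expPoly (c * a) a y) y := by
  unfold expPoly
  refine (HasDerivAt.fun_sum fun i _ =>
    (((hasDerivAt_id' y).const_mul (a i)).exp).const_mul (c i)).congr_deriv ?_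
  refine Finset.sum_congr rfl fun i _ => ?_
  simp only [Pi.mul_apply]
  ring

theorem expPoly_zero (c a : ι → ℝ) : expPoly c a 0 = ∑ i, c i := by
  simp [expPoly]

theorem exp_mul_expPoly_sub (c a : ι → ℝ) (b y : ℝ) :
    exp (b * y) * expPoly c (fun i => a i - b) y = expPoly c a y := by
  simp only [expPoly, Finset.mul_sum]
  refine Finset.sum_congr rfl fun i _ => ?_
  rw [mul_left_comm, ← exp_add]
  ring_nf

theorem expPoly_pos {c a : ι → ℝ} (h0 : ∑ i, c i = 0) (h1 : ∑ i, c i * a i = 0)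
    (h2 : ∀ y ≠ 0, 0 < expPoly (c * a * a) a y) {y : ℝ} (hy : y ≠ 0) : 0 < expPoly c a y :=
  pos_of_hasDerivAt_of_deriv2_pos (hasDerivAt_expPoly c a) (hasDerivAt_expPoly (c * a) a)
    (by rw [expPoly_zero, h0]) (by rw [expPoly_zero, ← h1]; rfl) h2 hy

end ExpPoly

noncomputable def rhoCoeff (p : ℝ) : Fin 6 → ℝ :=
  ![3, (p - 1) * (p - 8), (p - 1) * (2 * p - 1), -((p - 1) * (p - 3)), -(2 * p ^ 2 - 7 * p + 8),
    p - 1]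

noncomputable def rhoExp (p : ℝ) : Fin 6 → ℝ := ![2 - p, 0, p - 2, 2, p, 2 * p - 2]

theorem expPoly_rho_shifted_deriv2_pos {p : ℝ} (hp : 2 < p) (y : ℝ) :
    0 < expPoly (rhoCoeff p * rhoExp p * rhoExp p * (fun i => rhoExp p i - p) *
      (fun i => rhoExp p i - p)) (fun i => rhoExp p i - p) y := by
  have key : (p - 3) * exp ((2 - p) * y) ≤
      3 * (p - 1) * exp ((2 - 2 * p) * y) + (p - 1) ^ 2 * exp ((p - 2) * y) := by
    rcases le_or_gt p 3 with hp3 | hp3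
    · nlinarith [exp_pos ((2 - p) * y), exp_pos ((2 - 2 * p) * y), exp_pos ((p - 2) * y)]
    · have := exp_mul_le_exp_mul_add_exp_mul (a := 2 - 2 * p) (b := 2 - p) (c := p - 2)
        (by linarith) (by linarith) y
      nlinarith [mul_le_mul_of_nonneg_left this (by linarith : (0 : ℝ) ≤ p - 3),
        mul_nonneg (by linarith : (0 : ℝ) ≤ 2 * p) (exp_pos ((2 - 2 * p) * y)).le,
        mul_nonneg (by nlinarith : (0 : ℝ) ≤ (p - 1) ^ 2 - (p - 3)) (exp_pos ((p - 2) * y)).le]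
  have hfac : 0 < 4 * (p - 1) * (p - 2) ^ 2 := by
    have : 0 < p - 1 := by linarith
    have : 0 < p - 2 := by linarith
    positivity
  have hmid : 0 < (2 * p - 1) * exp (-2 * y) := mul_pos (by linarith) (exp_pos _)
  have hexpand : expPoly (rhoCoeff p * rhoExp p * rhoExp p * (fun i => rhoExp p i - p) *
      (fun i => rhoExp p i - p)) (fun i => rhoExp p i - p) y =
      4 * (p - 1) * (p - 2) ^ 2 * (3 * (p - 1) * exp ((2 - 2 * p) * y) +
        (2 * p - 1) * exp (-2 * y) - (p - 3) * exp ((2 - p) * y) +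
        (p - 1) ^ 2 * exp ((p - 2) * y)) := by
    simp only [expPoly, Fin.sum_univ_six, rhoCoeff, rhoExp, Matrix.cons_val, Pi.mul_apply]
    ring_nf
  rw [hexpand]
  exact mul_pos hfac (by linarith)

theorem expPoly_rho_pos {p : ℝ} (hp : 2 < p) {y : ℝ} (hy : y ≠ 0) :
    0 < expPoly (rhoCoeff p) (rhoExp p) y := by
  refine expPoly_pos (by simp only [Fin.sum_univ_six, rhoCoeff, Matrix.cons_val]; ring)
    (by simp only [Fin.sum_univ_six, rhoCoeff, rhoExp, Matrix.cons_val]; ring) (fun y hy => ?_) hy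
  rw [← exp_mul_expPoly_sub _ _ p y]
  refine mul_pos (exp_pos _) (expPoly_pos ?_ ?_ (fun y _ => expPoly_rho_shifted_deriv2_pos hp y) hy)
  · simp only [Fin.sum_univ_six, rhoCoeff, rhoExp, Matrix.cons_val, Pi.mul_apply]; ring
  · simp only [Fin.sum_univ_six, rhoCoeff, rhoExp, Matrix.cons_val, Pi.mul_apply]; ring

def rhoPoly (p t s : ℝ) : ℝ :=
  3 + (p - 1) * (p - 8) * s + (p - 1) * (2 * p - 1) * s ^ 2 - (p - 1) * (p - 3) * s * t ^ 2
    - (2 * p ^ 2 - 7 * p + 8) * s ^ 2 * t ^ 2 + (p - 1) * s ^ 3 * t ^ 2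

theorem rhoPoly_exp (p x : ℝ) :
    rhoPoly p (exp x) (exp ((p - 2) * x)) =
      exp ((p - 2) * x) * expPoly (rhoCoeff p) (rhoExp p) x := by
  have e0 : exp ((2 - p) * x) * exp ((p - 2) * x) = 1 := by rw [← exp_add]; ring_nf; exact exp_zero
  have e2 : exp (2 * x) = exp x ^ 2 := by rw [sq, ← exp_add]; ring_nf
  have ep : exp (p * x) = exp ((p - 2) * x) * exp x ^ 2 := by rw [sq, ← exp_add, ← exp_add]; ring_nf
  have e2p : exp ((2 * p - 2) * x) = exp ((p - 2) * x) ^ 2 * exp x ^ 2 := by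
    rw [sq, sq, ← exp_add, ← exp_add, ← exp_add]; ring_nf
  simp only [rhoPoly, expPoly, Fin.sum_univ_six, rhoCoeff, rhoExp, Matrix.cons_val, zero_mul,
    exp_zero, e2, ep, e2p]
  linear_combination (-3) * e0

theorem rhoPoly_pos {p t : ℝ} (hp : 2 < p) (ht : 0 < t) (ht1 : t ≠ 1) :
    0 < rhoPoly p t (t ^ (p - 2)) := by
  have hlog : log t ≠ 0 := log_ne_zero_of_pos_of_ne_one ht ht1
  rw [rpow_def_of_pos ht, mul_comm, ← exp_log ht, log_exp, rhoPoly_exp]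
  exact mul_pos (exp_pos _) (expPoly_rho_pos hp hlog)

theorem deriv_eq_of_eqOn_Ioi {F G : ℝ → ℝ} {g' t : ℝ} (hFG : EqOn F G (Ioi 0)) (ht : 0 < t)
    (hG : HasDerivAt G g' t) : deriv F t = g' :=
  (hG.congr_of_eventuallyEq (hFG.eventuallyEq_of_mem (Ioi_mem_nhds ht))).deriv

section Derivatives

variable {p : ℝ} {f : ℝ → ℝ}

theorem deriv_eq_sub_rpow (hf : ∀ t, f t = t ^ 2 / 2 - t ^ p / p) (hp : p ≠ 0) {t : ℝ}
    (ht : 0 < t) : deriv f t = t - t ^ (p - 1) := by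
  rw [show f = fun t => t ^ 2 / 2 - t ^ p / p from funext hf]
  refine (((hasDerivAt_pow 2 t).div_const 2).sub
    ((hasDerivAt_rpow_const (Or.inl ht.ne')).div_const p)).deriv.trans ?_
  field_simp
  ring

theorem deriv_deriv_eq_one_sub_rpow (hf : ∀ t, f t = t ^ 2 / 2 - t ^ p / p) (hp : p ≠ 0) {t : ℝ}
    (ht : 0 < t) : deriv (deriv f) t = 1 - (p - 1) * t ^ (p - 2) := by
  refine deriv_eq_of_eqOn_Ioi (fun u hu => deriv_eq_sub_rpow hf hp hu) ht ?_
  exact ((hasDerivAt_id' t).sub (hasDerivAt_rpow_const (Or.inl ht.ne'))).congr_deriv (by ring_nf)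

theorem deriv_deriv_deriv_eq_rpow (hf : ∀ t, f t = t ^ 2 / 2 - t ^ p / p) (hp : p ≠ 0) {t : ℝ}
    (ht : 0 < t) : deriv (deriv (deriv f)) t = -((p - 1) * (p - 2)) * t ^ (p - 3) := by
  refine deriv_eq_of_eqOn_Ioi (fun u hu => deriv_deriv_eq_one_sub_rpow hf hp hu) ht ?_
  exact (((hasDerivAt_rpow_const (Or.inl ht.ne')).const_mul (p - 1)).const_sub 1).congr_deriv
    (by ring_nf)

theorem rho_expr_eq_rhoPoly (hf : ∀ t, f t = t ^ 2 / 2 - t ^ p / p) (hp : p ≠ 0) {t : ℝ}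
    (ht : 0 < t) :
    -3 * deriv (deriv f) t * (deriv f t) ^ 2 + 6 * (f t - f 1) * (deriv (deriv f) t) ^ 2
      - 2 * (f t - f 1) * deriv (deriv (deriv f)) t * deriv f t
      = -((p - 2) / p) * rhoPoly p t (t ^ (p - 2)) := by
  have e1 : t ^ (p - 1) = t ^ (p - 2) * t := by
    rw [← rpow_add_one ht.ne']; ring_nf
  have e0 : t ^ p = t ^ (p - 2) * t ^ 2 := by
    rw [← rpow_natCast, ← rpow_add ht]; ring_nf
  have e3 : t ^ (p - 3) = t ^ (p - 2) / t := by
    rw [← rpow_sub_one ht.ne']; ring_nf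
  rw [deriv_eq_sub_rpow hf hp ht, deriv_deriv_eq_one_sub_rpow hf hp ht,
    deriv_deriv_deriv_eq_rpow hf hp ht, hf, hf, one_rpow, e1, e0, e3, rhoPoly]
  field_simp
  ring

end Derivatives

theorem stmt_5 (p : ℝ) (hp : 2 < p) (f ρ : ℝ → ℝ)
    (hf : ∀ t : ℝ, f t = t ^ 2 / 2 - t ^ p / p)
    (hρ : ∀ t : ℝ, 0 < t → t ≠ 1 →
      ρ t = -3 * deriv (deriv f) t * (deriv f t) ^ 2
        + 6 * (f t - f 1) * (deriv (deriv f) t) ^ 2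
        - 2 * (f t - f 1) * deriv (deriv (deriv f)) t * deriv f t) :
    (∀ t : ℝ, 0 < t → t ≠ 1 → ρ t < 0) ∧
    Tendsto ρ (nhdsWithin 0 (Ioi 0)) (nhds (-6 * f 1)) := by
  have hp0 : p ≠ 0 := by linarith
  have hscale : 0 < (p - 2) / p := div_pos (by linarith) (by linarith)
  have hρ' : ∀ t, 0 < t → t ≠ 1 → ρ t = -((p - 2) / p) * rhoPoly p t (t ^ (p - 2)) :=
    fun t ht ht1 => (hρ t ht ht1).trans (rho_expr_eq_rhoPoly hf hp0 ht)
  refine ⟨fun t ht ht1 => ?_, ?_⟩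
  · rw [hρ' t ht ht1]
    exact mul_neg_of_neg_of_pos (neg_neg_of_pos hscale) (rhoPoly_pos hp ht ht1)
  · have hev : (fun t => -((p - 2) / p) * rhoPoly p t (t ^ (p - 2)))
        =ᶠ[nhdsWithin 0 (Ioi 0)] ρ := by
      filter_upwards [Ioo_mem_nhdsGT (zero_lt_one' ℝ)] with t ht
      exact (hρ' t ht.1 ht.2.ne).symm
    have hcont : ContinuousAt (fun t => -((p - 2) / p) * rhoPoly p t (t ^ (p - 2))) 0 := by
      have := continuousAt_rpow_const 0 (p - 2) (Or.inr (by linarith))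
      unfold rhoPoly
      fun_prop
    have hlim : -6 * f 1 = -((p - 2) / p) * rhoPoly p 0 (0 ^ (p - 2)) := by
      rw [hf, one_rpow, zero_rpow (by linarith), rhoPoly]
      field_simp
      ring
    rw [hlim]
    exact (hcont.tendsto.mono_left nhdsWithin_le_nhds).congr' hev
end

section
/- Let f(t) = t²/2 − t⁶/6 and let f₂⁻¹ denote the inverse of the restriction of f to [1, 3^{1/4}]. Define h(z) = 3 − (f₂⁻¹(−3 f(z)))² for z ∈ (0, 1]. Then h is strictly decreasing on (0,1) and h(1) = 3 − (f₂⁻¹(−1))² > 0; consequently h(z) > 0 for all z ∈ (0, 1]. -/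
open Set Real

theorem stmt_10 (f g h : ℝ → ℝ) (hf : ∀ t : ℝ, f t = t ^ 2 / 2 - t ^ 6 / 6)
    (hg1 : ∀ t : ℝ, 1 ≤ t → g (f t) = t)
    (hg2 : ∀ y : ℝ, y ≤ f 1 → 1 ≤ g y ∧ f (g y) = y)
    (hh : ∀ z ∈ Set.Ioc (0 : ℝ) 1, h z = 3 - (g (-3 * f z)) ^ 2) :
    StrictAntiOn h (Set.Ioo 0 1) ∧ h 1 = 3 - (g (-1)) ^ 2 ∧ 0 < h 1 ∧
    ∀ z ∈ Set.Ioc (0 : ℝ) 1, 0 < h z := by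
  have hf1 : f 1 = 1/3 := by rw [hf]; norm_num
  -- f is strictly decreasing on [1, ∞)
  have hfanti : ∀ a b : ℝ, 1 ≤ a → a < b → f b < f a := by
    intro a b ha hab
    rw [hf, hf]
    have hb1 : 1 < b := lt_of_le_of_lt ha hab
    have hb2 : 1 < b ^ 2 := by nlinarith
    have hb4 : 1 < b ^ 4 := by nlinarith
    have ha2 : 1 ≤ a ^ 2 := by nlinarith
    have ha4 : 1 ≤ a ^ 4 := by nlinarith
    have hab2 : 1 ≤ a ^ 2 * b ^ 2 := by nlinarith [mul_le_mul ha2 hb2.le zero_le_one (by positivity : (0:ℝ) ≤ a ^ 2)]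
    have h1 : 0 < b ^ 2 - a ^ 2 := by nlinarith
    have h2 : 3 < b ^ 4 + a ^ 2 * b ^ 2 + a ^ 4 := by linarith
    nlinarith [mul_pos h1 (show (0:ℝ) < b ^ 4 + a ^ 2 * b ^ 2 + a ^ 4 - 3 by linarith)]
  -- g is strictly antitone on (-∞, 1/3]
  have hganti : ∀ y1 y2 : ℝ, y1 < y2 → y2 ≤ 1/3 → g y2 < g y1 := by
    intro y1 y2 h12 h2
    obtain ⟨hb1, hb2⟩ := hg2 y2 (by rw [hf1]; exact h2)
    obtain ⟨ha1, ha2⟩ := hg2 y1 (by rw [hf1]; linarith)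
    by_contra hc
    push_neg at hc
    rcases lt_or_eq_of_le hc with hlt | heq
    · have := hfanti (g y1) (g y2) ha1 hlt
      rw [ha2, hb2] at this; linarith
    · rw [heq, hb2] at ha2; linarith
  -- key bound: for y ∈ [-1, 1/3], (g y)^2 < 3
  have hbound : ∀ y : ℝ, -1 ≤ y → y ≤ 1/3 → (g y) ^ 2 < 3 := by
    intro y h1 h2
    obtain ⟨hgy1, hgy2⟩ := hg2 y (by rw [hf1]; exact h2)
    rw [hf] at hgy2
    set t := g y with ht
    by_contra hc
    push_neg at hc
    nlinarith [sq_nonneg t, sq_nonneg (t^2 - 3), mul_nonneg (sub_nonneg.2 hc) (sq_nonneg t),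
      mul_nonneg (mul_nonneg (sub_nonneg.2 hc) (sub_nonneg.2 hc)) (sq_nonneg t)]
  -- f strictly increasing on (0,1]
  have hfmono : ∀ a b : ℝ, 0 < a → a < b → b ≤ 1 → f a < f b := by
    intro a b ha hab hb
    rw [hf, hf]
    have h1 : 0 < b ^ 2 - a ^ 2 := by nlinarith
    have ha1 : a < 1 := lt_of_lt_of_le hab hb
    have ha2 : a ^ 2 < 1 := by nlinarith
    have ha4 : a ^ 4 < 1 := by nlinarith
    have hb2 : b ^ 2 ≤ 1 := by nlinarith
    have hb4 : b ^ 4 ≤ 1 := by nlinarith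
    have hab2 : a ^ 2 * b ^ 2 ≤ a ^ 2 := by nlinarith [mul_le_mul_of_nonneg_left hb2 (sq_nonneg a)]
    have h2 : b ^ 4 + a ^ 2 * b ^ 2 + a ^ 4 < 3 := by linarith
    nlinarith [mul_pos h1 (show (0:ℝ) < 3 - (b ^ 4 + a ^ 2 * b ^ 2 + a ^ 4) by linarith)]
  -- range of f on (0,1]
  have hfrange : ∀ z : ℝ, 0 < z → z ≤ 1 → 0 < f z ∧ f z ≤ 1/3 := by
    intro z hz hz1
    rw [hf]
    constructor
    · have hz2 : z ^ 2 ≤ 1 := by nlinarith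
      have h4 : z ^ 4 ≤ 1 := by nlinarith [mul_le_mul hz2 hz2 (sq_nonneg z) zero_le_one]
      nlinarith [mul_pos (pow_pos hz 2) (show (0:ℝ) < 3 - z ^ 4 by linarith)]
    · nlinarith [sq_nonneg (z^2 - 1), sq_nonneg (z^2 + 1), sq_nonneg z,
        sq_nonneg (z^4 - 1), sq_nonneg (z^3 - z)]
  have hm1 : (-1 : ℝ) = -3 * f 1 := by rw [hf1]; norm_num
  have hh1 : h 1 = 3 - (g (-1)) ^ 2 := by
    rw [hh 1 (by constructor <;> norm_num), hm1]
  refine ⟨?_, hh1, ?_, ?_⟩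
  · intro z1 hz1 z2 hz2 h12
    obtain ⟨hz1a, hz1b⟩ := hz1
    obtain ⟨hz2a, hz2b⟩ := hz2
    rw [hh z1 ⟨hz1a, le_of_lt hz1b⟩, hh z2 ⟨hz2a, le_of_lt hz2b⟩]
    have hfz : f z1 < f z2 := hfmono z1 z2 hz1a h12 (le_of_lt hz2b)
    obtain ⟨hp1, hq1⟩ := hfrange z1 hz1a (le_of_lt hz1b)
    obtain ⟨hp2, hq2⟩ := hfrange z2 hz2a (le_of_lt hz2b)
    have hg12 : g (-3 * f z1) < g (-3 * f z2) :=
      hganti (-3 * f z2) (-3 * f z1) (by linarith) (by linarith)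
    have hge1 : 1 ≤ g (-3 * f z1) := (hg2 _ (by rw [hf1]; linarith)).1
    have : (g (-3 * f z1)) ^ 2 < (g (-3 * f z2)) ^ 2 := by nlinarith
    linarith
  · rw [hh1]
    have := hbound (-1) le_rfl (by norm_num)
    linarith
  · intro z ⟨hz0, hz1⟩
    rw [hh z ⟨hz0, hz1⟩]
    obtain ⟨hp, hq⟩ := hfrange z hz0 hz1
    have := hbound (-3 * f z) (by linarith) (by linarith)
    linarith
end

section
/- Define h : (1, 2) → ℝ by h(ξ) = ln((ξ+1)/(3(ξ−1))) + 2ξ/(ξ²−1) − ξ·ln²((ξ+1)/(3(ξ−1))). Then h'(ξ) = −( ln((ξ+1)/(3(ξ−1))) − 2ξ/(ξ²−1) )² ≤ 0 for all ξ ∈ (1, 2), h extends continuously to ξ = 2 with h(2) = 4/3, and consequently h(ξ) > 0 for all ξ ∈ (1, 2). -/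
/-!
With `L ξ = log ((ξ + 1) / (3 (ξ - 1)))` one has `L' = -2 / (ξ² - 1)`, which makes `h'` a negative
square. So `h` is nonincreasing on all of `(1, ∞)`; it is smooth across `ξ = 2`, where `L` vanishes
and `h(2) = 4/3`, hence `h ≥ 4/3 > 0` on `(1, 2)`.
-/

open Set Real Filter Topology

noncomputable def logRatio (x : ℝ) : ℝ := log ((x + 1) / (3 * (x - 1)))

noncomputable def vkH (x : ℝ) : ℝ := logRatio x + 2 * x / (x ^ 2 - 1) - x * logRatio x ^ 2

lemma hasDerivAt_logRatio {x : ℝ} (hx₁ : x - 1 ≠ 0) (hx₂ : x + 1 ≠ 0) :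
    HasDerivAt logRatio (-2 / (x ^ 2 - 1)) x := by
  have hden : 3 * (x - 1) ≠ 0 := mul_ne_zero three_ne_zero hx₁
  have hq : HasDerivAt (fun y ↦ (y + 1) / (3 * (y - 1))) (-6 / (3 * (x - 1)) ^ 2) x :=
    (((hasDerivAt_id' x).add_const 1).fun_div
      (((hasDerivAt_id' x).sub_const 1).const_mul 3) hden).congr_deriv (by ring)
  refine (hq.log (div_ne_zero hx₂ hden)).congr_deriv ?_
  rw [show x ^ 2 - 1 = (x - 1) * (x + 1) by ring]
  field_simp
  ring

lemma hasDerivAt_vkH {x : ℝ} (hx₁ : x - 1 ≠ 0) (hx₂ : x + 1 ≠ 0) :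
    HasDerivAt vkH (-(logRatio x - 2 * x / (x ^ 2 - 1)) ^ 2) x := by
  have hsq : x ^ 2 - 1 ≠ 0 := by
    rw [show x ^ 2 - 1 = (x - 1) * (x + 1) by ring]
    exact mul_ne_zero hx₁ hx₂
  have hL := hasDerivAt_logRatio hx₁ hx₂
  have hg : HasDerivAt (fun y ↦ 2 * y / (y ^ 2 - 1)) (-2 * (x ^ 2 + 1) / (x ^ 2 - 1) ^ 2) x :=
    (((hasDerivAt_id' x).const_mul 2).fun_div
      (((hasDerivAt_id' x).fun_pow 2).sub_const 1) hsq).congr_deriv (by ring)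
  have hQ : HasDerivAt (fun y ↦ y * logRatio y ^ 2)
      (logRatio x ^ 2 + x * (2 * logRatio x * (-2 / (x ^ 2 - 1)))) x :=
    ((hasDerivAt_id' x).fun_mul (hL.fun_pow 2)).congr_deriv (by ring)
  refine ((hL.add hg).sub hQ).congr_deriv ?_
  field_simp
  ring

lemma antitoneOn_vkH : AntitoneOn vkH (Ioi 1) := by
  have hder : ∀ x ∈ Ioi (1 : ℝ), HasDerivAt vkH (-(logRatio x - 2 * x / (x ^ 2 - 1)) ^ 2) x :=
    fun x (hx : 1 < x) ↦ hasDerivAt_vkH (by linarith) (by linarith)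
  refine antitoneOn_of_hasDerivWithinAt_nonpos
    (f' := fun x ↦ -(logRatio x - 2 * x / (x ^ 2 - 1)) ^ 2) (convex_Ioi 1)
    (fun x hx ↦ (hder x hx).continuousAt.continuousWithinAt) (fun x hx ↦ ?_)
    (fun x _ ↦ neg_nonpos.mpr (sq_nonneg _))
  rw [interior_Ioi] at hx
  exact (hder x hx).hasDerivWithinAt

lemma vkH_two : vkH 2 = 4 / 3 := by
  norm_num [vkH, logRatio]

theorem stmt_18 (h : ℝ → ℝ)
    (hh : ∀ ξ ∈ Set.Ioo (1 : ℝ) 2,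
      h ξ = Real.log ((ξ + 1) / (3 * (ξ - 1))) + 2 * ξ / (ξ ^ 2 - 1)
        - ξ * (Real.log ((ξ + 1) / (3 * (ξ - 1)))) ^ 2) :
    (∀ ξ ∈ Set.Ioo (1 : ℝ) 2,
      HasDerivAt h (-(Real.log ((ξ + 1) / (3 * (ξ - 1))) - 2 * ξ / (ξ ^ 2 - 1)) ^ 2) ξ) ∧
    Tendsto h (nhdsWithin 2 (Set.Iio 2)) (nhds (4 / 3)) ∧
    ∀ ξ ∈ Set.Ioo (1 : ℝ) 2, 0 < h ξ := by
  have heq : EqOn h vkH (Ioo 1 2) := hh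
  refine ⟨fun ξ hξ ↦ ?_, ?_, fun ξ hξ ↦ ?_⟩
  · exact (hasDerivAt_vkH (by linarith [hξ.1]) (by linarith [hξ.1])).congr_of_eventuallyEq
      (eventuallyEq_of_mem (Ioo_mem_nhds hξ.1 hξ.2) heq)
  · have hcont : ContinuousAt vkH 2 :=
      (hasDerivAt_vkH (by norm_num) (by norm_num)).continuousAt
    rw [← vkH_two]
    exact (hcont.tendsto.mono_left nhdsWithin_le_nhds).congr'
      (eventuallyEq_of_mem (Ioo_mem_nhdsLT one_lt_two) heq).symm
  · calc 0 < vkH 2 := by rw [vkH_two]; norm_num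
      _ ≤ vkH ξ := antitoneOn_vkH hξ.1 (show (2 : ℝ) ∈ Ioi 1 by norm_num) hξ.2.le
      _ = h ξ := (heq hξ).symm
end

section
/- Define j : (0, 1) → ℝ by j(ξ) = ln((ξ+1)/(3(1−ξ))) + 2ξ/(ξ²−1) − ξ·ln²((ξ+1)/(3(1−ξ))). Then j'(ξ) = −( ln((ξ+1)/(3(1−ξ))) − 2ξ/(ξ²−1) )² ≤ 0 for all ξ ∈ (0,1), j extends continuously to ξ = 0 with j(0) = ln(1/3) < 0, and consequently j(ξ) < 0 for all ξ ∈ (0, 1). -/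
/-! The formula for `j` makes sense and is differentiable on all of `(-1, 1)`, with derivative minus
a square. So it is antitone there and continuous at `0`, and `j ξ ≤ j 0 = log (1/3) < 0`. -/

open Set Real Filter

noncomputable def tadpoleLog (ξ : ℝ) : ℝ := Real.log ((ξ + 1) / (3 * (1 - ξ)))

noncomputable def tadpoleJ (ξ : ℝ) : ℝ :=
  tadpoleLog ξ + 2 * ξ / (ξ ^ 2 - 1) - ξ * tadpoleLog ξ ^ 2

lemma hasDerivAt_tadpoleLog {ξ : ℝ} (hξ : ξ ∈ Ioo (-1 : ℝ) 1) :
    HasDerivAt tadpoleLog (-2 / (ξ ^ 2 - 1)) ξ := by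
  obtain ⟨hlo, hhi⟩ := hξ
  have hden : 3 * (1 - ξ) ≠ 0 := by linarith
  have hratio := (hasDerivAt_id' (x := ξ)).add_const 1 |>.fun_div
    (((hasDerivAt_id' (x := ξ)).const_sub 1).const_mul 3) hden
  refine (hratio.log (div_pos (by linarith) (by linarith)).ne').congr_deriv ?_
  have : ξ + 1 ≠ 0 := by linarith
  have : 1 - ξ ≠ 0 := by linarith
  have : ξ ^ 2 - 1 ≠ 0 := by nlinarith
  field_simp
  ring

lemma hasDerivAt_tadpoleJ {ξ : ℝ} (hξ : ξ ∈ Ioo (-1 : ℝ) 1) :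
    HasDerivAt tadpoleJ (-(tadpoleLog ξ - 2 * ξ / (ξ ^ 2 - 1)) ^ 2) ξ := by
  have hsq : ξ ^ 2 - 1 ≠ 0 := by nlinarith [hξ.1, hξ.2]
  have hL := hasDerivAt_tadpoleLog hξ
  have hrat : HasDerivAt (fun x : ℝ => 2 * x / (x ^ 2 - 1))
      ((2 * (ξ ^ 2 - 1) - 2 * ξ * (2 * ξ)) / (ξ ^ 2 - 1) ^ 2) ξ := by
    simpa using ((hasDerivAt_id' (x := ξ)).const_mul 2).fun_div ((hasDerivAt_pow 2 ξ).sub_const 1) hsq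
  refine ((hL.add hrat).sub ((hasDerivAt_id' (x := ξ)).mul (hL.fun_pow 2))).congr_deriv ?_
  field_simp
  ring

lemma antitoneOn_tadpoleJ : AntitoneOn tadpoleJ (Ioo (-1 : ℝ) 1) := by
  refine antitoneOn_of_deriv_nonpos (convex_Ioo _ _)
    (fun x hx => (hasDerivAt_tadpoleJ hx).continuousAt.continuousWithinAt)
    (fun x hx => ?_) (fun x hx => ?_) <;> rw [interior_Ioo] at hx
  · exact (hasDerivAt_tadpoleJ hx).differentiableAt.differentiableWithinAt
  · rw [(hasDerivAt_tadpoleJ hx).deriv]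
    exact neg_nonpos.mpr (sq_nonneg _)

lemma tadpoleJ_zero : tadpoleJ 0 = Real.log (1 / 3) := by
  simp [tadpoleJ, tadpoleLog]

lemma tadpoleJ_neg {ξ : ℝ} (hξ : ξ ∈ Ico (0 : ℝ) 1) : tadpoleJ ξ < 0 := calc
  tadpoleJ ξ ≤ tadpoleJ 0 :=
    antitoneOn_tadpoleJ (by norm_num) ⟨by linarith [hξ.1], hξ.2⟩ hξ.1
  _ = Real.log (1 / 3) := tadpoleJ_zero
  _ < 0 := Real.log_neg (by norm_num) (by norm_num)

theorem stmt_19 (j : ℝ → ℝ)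
    (hj : ∀ ξ ∈ Set.Ioo (0 : ℝ) 1,
      j ξ = Real.log ((ξ + 1) / (3 * (1 - ξ))) + 2 * ξ / (ξ ^ 2 - 1)
        - ξ * (Real.log ((ξ + 1) / (3 * (1 - ξ)))) ^ 2) :
    (∀ ξ ∈ Set.Ioo (0 : ℝ) 1,
      HasDerivAt j (-(Real.log ((ξ + 1) / (3 * (1 - ξ))) - 2 * ξ / (ξ ^ 2 - 1)) ^ 2) ξ) ∧
    Tendsto j (nhdsWithin 0 (Set.Ioi 0)) (nhds (Real.log (1 / 3))) ∧
    Real.log (1 / 3) < 0 ∧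
    ∀ ξ ∈ Set.Ioo (0 : ℝ) 1, j ξ < 0 := by
  have hjJ : ∀ ξ ∈ Ioo (0 : ℝ) 1, j ξ = tadpoleJ ξ := hj
  have hzero : (0 : ℝ) ∈ Ioo (-1 : ℝ) 1 := by norm_num
  refine ⟨fun ξ hξ => ?_, ?_, Real.log_neg (by norm_num) (by norm_num),
    fun ξ hξ => hjJ ξ hξ ▸ tadpoleJ_neg (Ioo_subset_Ico_self hξ)⟩
  · refine (hasDerivAt_tadpoleJ ⟨by linarith [hξ.1], hξ.2⟩).congr_of_eventuallyEq ?_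
    filter_upwards [Ioo_mem_nhds hξ.1 hξ.2] with x hx using hjJ x hx
  · rw [← tadpoleJ_zero]
    refine (hasDerivAt_tadpoleJ hzero).continuousAt.continuousWithinAt.tendsto.congr' ?_
    filter_upwards [Ioo_mem_nhdsGT (zero_lt_one' ℝ)] with x hx using (hjJ x hx).symm
end
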